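/- arXiv:2011.13501 — 4 statements merged into one kernel-verified Lean document; each statement's English description precedes it below -/
import Mathlib

section
/- Let (Ω, μ) be a finite measure space, T > 0, 1 < p < 5, and set θ = (5 − p)/(4p). Then there exists a constant C > 0, depending only on T, μ(Ω) and p, such that for all measurable u, w : Ω × (0,T) → ℝ with u ∈ L⁵(0,T; L^{10}(Ω)), w ∈ L²(0,T; L²(Ω)) ∩ L⁵(0,T; L^{10}(Ω)), one has ∫₀^T ‖ |u(·,t)|^{p−1} w(·,t) ‖_{L²(Ω)} dt ≤ C ‖u‖_{L⁵(0,T;L^{10}(Ω))}^{p−1} ‖w‖_{L²(0,T;L²(Ω))}^{θ} ‖w‖_{L⁵(0,T;L^{10}(Ω))}^{1−θ}. -/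
/-!
Pointwise, `(|u|^(p-1) |w|)² = (|u|¹⁰)^((p-1)/5) (|w|²)^θ (|w|¹⁰)^((1-θ)/5)`, and the three
exponents add up to at most `1` exactly when `(p - 1)(p - 5) ≤ 0`. Hölder's inequality in `x`
for three factors then bounds `‖|u|^(p-1) w‖_{L²}` by a power of `μ(Ω)` times
`‖u‖_{L¹⁰}^(p-1) ‖w‖_{L²}^θ ‖w‖_{L¹⁰}^(1-θ)`, and Hölder in `t` with exponents
`(p-1)/5, θ/2, (1-θ)/5` gives the mixed-norm estimate.
-/

open MeasureTheory Set Function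
open scoped ENNReal

section Spatial
variable {α : Type*} [MeasurableSpace α] {μ : Measure α}

theorem lintegral_rpow_mul_rpow_mul_rpow_le {f g h : α → ℝ≥0∞}
    (hf : AEMeasurable f μ) (hg : AEMeasurable g μ) (hh : AEMeasurable h μ)
    {a b c p q r : ℝ} (ha : 0 ≤ a) (hb : 0 ≤ b) (hc : 0 ≤ c) (hp : 0 < p) (hq : 0 < q)
    (hr : 0 < r) (hsum : a / p + b / q + c / r ≤ 1) :
    ∫⁻ x, f x ^ a * g x ^ b * h x ^ c ∂μ ≤
      μ univ ^ (1 - (a / p + b / q + c / r)) * (∫⁻ x, f x ^ p ∂μ) ^ (a / p) *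
        (∫⁻ x, g x ^ q ∂μ) ^ (b / q) * (∫⁻ x, h x ^ r ∂μ) ^ (c / r) := by
  have hpow : ∀ (x : ℝ≥0∞) {s : ℝ} (e : ℝ), 0 < s → (x ^ s) ^ (e / s) = x ^ e :=
    fun x s e hs => by rw [← ENNReal.rpow_mul, mul_div_cancel₀ _ hs.ne']
  -- the constant function `1` takes up the slack `1 - (a / p + b / q + c / r)`
  have key := ENNReal.lintegral_prod_norm_pow_le (μ := μ) Finset.univ
    (f := ![1, fun x => f x ^ p, fun x => g x ^ q, fun x => h x ^ r])
    (p := ![1 - (a / p + b / q + c / r), a / p, b / q, c / r])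
    (fun i _ => by
      fin_cases i
      exacts [aemeasurable_const, hf.pow_const p, hg.pow_const q, hh.pow_const r])
    (by simp [Fin.sum_univ_four]; ring)
    (fun i _ => by
      fin_cases i
      exacts [sub_nonneg.2 hsum, div_nonneg ha hp.le, div_nonneg hb hq.le, div_nonneg hc hr.le])
  simpa [Fin.prod_univ_four, hpow _ _ hp, hpow _ _ hq, hpow _ _ hr, mul_assoc] using key

theorem enorm_abs_rpow_mul_rpow_two (y z : ℝ) {a θ : ℝ} (ha : 0 ≤ a) (hθ0 : 0 ≤ θ) (hθ1 : θ ≤ 1) :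
    ‖|y| ^ a * z‖ₑ ^ (2 : ℝ) = ‖y‖ₑ ^ (2 * a) * ‖z‖ₑ ^ (2 * θ) * ‖z‖ₑ ^ (2 * (1 - θ)) := by
  rw [enorm_mul, Real.enorm_eq_ofReal_abs (|y| ^ a), abs_of_nonneg (by positivity),
    ← ENNReal.ofReal_rpow_of_nonneg (abs_nonneg y) ha, ← Real.enorm_eq_ofReal_abs, mul_assoc,
    ← ENNReal.rpow_add_of_nonneg _ _ (by positivity) (by linarith),
    ENNReal.mul_rpow_of_nonneg _ _ zero_le_two, ← ENNReal.rpow_mul, mul_comm a]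
  ring_nf

theorem eLpNorm_abs_rpow_mul_le {f g : α → ℝ} (hf : AEMeasurable f μ) (hg : AEMeasurable g μ)
    {a θ : ℝ} (ha : 0 ≤ a) (hθ0 : 0 ≤ θ) (hθ1 : θ ≤ 1) (h : a + 4 * θ ≤ 4) :
    eLpNorm (fun x => |f x| ^ a * g x) 2 μ ≤ μ univ ^ ((4 - a - 4 * θ) / 10) *
      eLpNorm f 10 μ ^ a * eLpNorm g 2 μ ^ θ * eLpNorm g 10 μ ^ (1 - θ) := by
  have holder := lintegral_rpow_mul_rpow_mul_rpow_le (μ := μ) hf.enorm hg.enorm hg.enorm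
    (by positivity : 0 ≤ 2 * a) (by positivity : 0 ≤ 2 * θ) (by linarith : 0 ≤ 2 * (1 - θ))
    (by norm_num : (0:ℝ) < 10) (by norm_num : (0:ℝ) < 2) (by norm_num : (0:ℝ) < 10)
    (by linarith)
  simp only [eLpNorm_eq_lintegral_rpow_enorm_toReal (by norm_num : (2:ℝ≥0∞) ≠ 0) (by simp),
    eLpNorm_eq_lintegral_rpow_enorm_toReal (by norm_num : (10:ℝ≥0∞) ≠ 0) (by simp)]
  simp only [ENNReal.toReal_ofNat, enorm_abs_rpow_mul_rpow_two _ _ ha hθ0 hθ1]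
  calc _ ≤ (μ univ ^ (1 - (2 * a / 10 + 2 * θ / 2 + 2 * (1 - θ) / 10)) *
        (∫⁻ x, ‖f x‖ₑ ^ (10:ℝ) ∂μ) ^ (2 * a / 10) * (∫⁻ x, ‖g x‖ₑ ^ (2:ℝ) ∂μ) ^ (2 * θ / 2) *
        (∫⁻ x, ‖g x‖ₑ ^ (10:ℝ) ∂μ) ^ (2 * (1 - θ) / 10)) ^ (1 / (2:ℝ)) := by gcongr
    _ = _ := by
      simp only [ENNReal.mul_rpow_of_nonneg _ _ (by norm_num : (0:ℝ) ≤ 1 / 2), ← ENNReal.rpow_mul]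
      ring_nf

theorem measurable_eLpNorm_of_uncurry [SFinite μ] {β E : Type*} [MeasurableSpace β]
    [NormedAddCommGroup E] [MeasurableSpace E] [OpensMeasurableSpace E] {v : β → α → E}
    (hv : Measurable (uncurry v)) {r : ℝ≥0∞} (hr0 : r ≠ 0) (hr : r ≠ ∞) :
    Measurable fun t => eLpNorm (v t) r μ := by
  simp_rw [eLpNorm_eq_lintegral_rpow_enorm_toReal hr0 hr]
  exact (hv.enorm.pow_const _).lintegral_prod_right'.pow_const _

theorem integral_abs_rpow_rpow_one_div {f : α → ℝ} (hf : AEStronglyMeasurable f μ) {r : ℝ}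
    (hr : 0 < r) :
    (∫ x, |f x| ^ r ∂μ) ^ (1 / r) = (eLpNorm f (ENNReal.ofReal r) μ).toReal := by
  have hm : AEStronglyMeasurable (fun x => |f x| ^ r) μ :=
    (hf.norm.aemeasurable.pow_const r).aestronglyMeasurable
  rw [integral_eq_lintegral_of_nonneg_ae (ae_of_all _ fun x => by positivity) hm,
    eLpNorm_eq_lintegral_rpow_enorm_toReal (by simpa using hr) ENNReal.ofReal_ne_top,
    ENNReal.toReal_ofReal hr.le, ENNReal.toReal_rpow]
  congr 2
  refine lintegral_congr fun x => ?_
  rw [Real.enorm_eq_ofReal_abs, ENNReal.ofReal_rpow_of_nonneg (abs_nonneg _) hr.le]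

theorem eLpNorm_lt_top_of_integrable_abs_rpow {f : α → ℝ} (hf : AEStronglyMeasurable f μ)
    {r : ℝ} (hr : 0 < r) (hint : Integrable (fun x => |f x| ^ r) μ) :
    eLpNorm f (ENNReal.ofReal r) μ < ∞ :=
  ((integrable_norm_rpow_iff hf (by simpa using hr) ENNReal.ofReal_ne_top).1
    (by simpa [ENNReal.toReal_ofReal hr.le] using hint)).eLpNorm_lt_top

end Spatial

section Temporal
variable {β : Type*} [MeasurableSpace β] {ν : Measure β}

theorem integral_toReal_le_toReal_lintegral {G : β → ℝ≥0∞} (hG : ∫⁻ t, G t ∂ν ≠ ∞) :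
    ∫ t, (G t).toReal ∂ν ≤ (∫⁻ t, G t ∂ν).toReal := by
  by_cases hint : Integrable (fun t => (G t).toReal) ν
  · rw [integral_eq_lintegral_of_nonneg_ae (ae_of_all _ fun t => ENNReal.toReal_nonneg)
      hint.aestronglyMeasurable]
    exact ENNReal.toReal_mono hG (lintegral_mono fun t => ENNReal.ofReal_toReal_le)
  · rw [integral_undef hint]
    exact ENNReal.toReal_nonneg

theorem integral_toReal_rpow_rpow_one_div {G : β → ℝ≥0∞} (hG : AEMeasurable G ν)
    (hG_lt : ∀ᵐ t ∂ν, G t < ∞) {q : ℝ} (hq : 0 < q) :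
    (∫ t, (G t).toReal ^ q ∂ν) ^ (1 / q) = (eLpNorm G (ENNReal.ofReal q) ν).toReal := by
  simp_rw [ENNReal.toReal_rpow]
  rw [integral_toReal (hG.pow_const q)
      (hG_lt.mono fun t ht => ENNReal.rpow_lt_top_of_nonneg hq.le ht.ne),
    ENNReal.toReal_rpow,
    eLpNorm_eq_lintegral_rpow_enorm_toReal (by simpa using hq) ENNReal.ofReal_ne_top,
    ENNReal.toReal_ofReal hq.le]
  simp only [enorm_eq_self]

theorem eLpNorm_lt_top_of_integrable_toReal_rpow {G : β → ℝ≥0∞} (hG : AEMeasurable G ν)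
    (hG_lt : ∀ᵐ t ∂ν, G t < ∞) {q : ℝ} (hq : 0 < q)
    (hint : Integrable (fun t => (G t).toReal ^ q) ν) :
    eLpNorm G (ENNReal.ofReal q) ν < ∞ := by
  simp_rw [ENNReal.toReal_rpow] at hint
  have hfin := (integrable_toReal_iff (hG.pow_const q)
    (hG_lt.mono fun t ht => (ENNReal.rpow_lt_top_of_nonneg hq.le ht.ne).ne)).1 hint
  rw [eLpNorm_eq_lintegral_rpow_enorm_toReal (by simpa using hq) ENNReal.ofReal_ne_top,
    ENNReal.toReal_ofReal hq.le]
  simp only [enorm_eq_self]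
  exact ENNReal.rpow_lt_top_of_nonneg (by positivity) hfin

end Temporal

section MixedNorm
variable {α β : Type*} [MeasurableSpace α] [MeasurableSpace β] {μ : Measure α} [SFinite μ]
  {ν : Measure β}

theorem integral_mixedNorm_eq {v : β → α → ℝ} {r q : ℝ} (hv : Measurable (uncurry v))
    (hr : 0 < r) (hq : 0 < q)
    (hv_int : ∀ᵐ t ∂ν, Integrable (fun x => |v t x| ^ r) μ) :
    (∫ t, ((∫ x, |v t x| ^ r ∂μ) ^ (1 / r)) ^ q ∂ν) ^ (1 / q) =
      (eLpNorm (fun t => eLpNorm (v t) (ENNReal.ofReal r) μ) (ENNReal.ofReal q) ν).toReal := by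
  simp_rw [integral_abs_rpow_rpow_one_div hv.of_uncurry_left.aestronglyMeasurable hr]
  exact integral_toReal_rpow_rpow_one_div
    (measurable_eLpNorm_of_uncurry hv (by simpa using hr) ENNReal.ofReal_ne_top).aemeasurable
    (hv_int.mono fun t ht => eLpNorm_lt_top_of_integrable_abs_rpow
      hv.of_uncurry_left.aestronglyMeasurable hr ht) hq

theorem eLpNorm_mixedNorm_lt_top {v : β → α → ℝ} {r q : ℝ} (hv : Measurable (uncurry v))
    (hr : 0 < r) (hq : 0 < q) (hv_int : ∀ᵐ t ∂ν, Integrable (fun x => |v t x| ^ r) μ)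
    (hint : Integrable (fun t => ((∫ x, |v t x| ^ r ∂μ) ^ (1 / r)) ^ q) ν) :
    eLpNorm (fun t => eLpNorm (v t) (ENNReal.ofReal r) μ) (ENNReal.ofReal q) ν < ∞ := by
  simp_rw [integral_abs_rpow_rpow_one_div hv.of_uncurry_left.aestronglyMeasurable hr] at hint
  exact eLpNorm_lt_top_of_integrable_toReal_rpow
    (measurable_eLpNorm_of_uncurry hv (by simpa using hr) ENNReal.ofReal_ne_top).aemeasurable
    (hv_int.mono fun t ht => eLpNorm_lt_top_of_integrable_abs_rpow
      hv.of_uncurry_left.aestronglyMeasurable hr ht) hq hint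

theorem lintegral_eLpNorm_abs_rpow_mul_le {u w : β → α → ℝ} (hu : Measurable (uncurry u))
    (hw : Measurable (uncurry w)) {a θ : ℝ} (ha : 0 ≤ a) (hθ0 : 0 ≤ θ) (hθ1 : θ ≤ 1)
    (h : a + 4 * θ ≤ 4) :
    ∫⁻ t, eLpNorm (fun x => |u t x| ^ a * w t x) 2 μ ∂ν ≤
      μ univ ^ ((4 - a - 4 * θ) / 10) * ν univ ^ ((8 - 2 * a - 3 * θ) / 10) *
        eLpNorm (fun t => eLpNorm (u t) 10 μ) 5 ν ^ a *
        eLpNorm (fun t => eLpNorm (w t) 2 μ) 2 ν ^ θ *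
        eLpNorm (fun t => eLpNorm (w t) 10 μ) 5 ν ^ (1 - θ) := by
  have hU := measurable_eLpNorm_of_uncurry (μ := μ) hu (r := 10) (by norm_num) (by simp)
  have hW2 := measurable_eLpNorm_of_uncurry (μ := μ) hw (r := 2) (by norm_num) (by simp)
  have hW10 := measurable_eLpNorm_of_uncurry (μ := μ) hw (r := 10) (by norm_num) (by simp)
  have holder := lintegral_rpow_mul_rpow_mul_rpow_le (μ := ν) hU.aemeasurable hW2.aemeasurable
    hW10.aemeasurable ha hθ0 (by linarith : 0 ≤ 1 - θ)
    (by norm_num : (0:ℝ) < 5) (by norm_num : (0:ℝ) < 2) (by norm_num : (0:ℝ) < 5) (by linarith)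
  calc ∫⁻ t, eLpNorm (fun x => |u t x| ^ a * w t x) 2 μ ∂ν
      ≤ ∫⁻ t, μ univ ^ ((4 - a - 4 * θ) / 10) * (eLpNorm (u t) 10 μ ^ a *
          eLpNorm (w t) 2 μ ^ θ * eLpNorm (w t) 10 μ ^ (1 - θ)) ∂ν :=
        lintegral_mono fun t => (eLpNorm_abs_rpow_mul_le hu.of_uncurry_left.aemeasurable
          hw.of_uncurry_left.aemeasurable ha hθ0 hθ1 h).trans_eq (by ring)
    _ = μ univ ^ ((4 - a - 4 * θ) / 10) * ∫⁻ t, eLpNorm (u t) 10 μ ^ a *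
          eLpNorm (w t) 2 μ ^ θ * eLpNorm (w t) 10 μ ^ (1 - θ) ∂ν :=
        lintegral_const_mul _ (by fun_prop)
    _ ≤ _ := by
      grw [holder]
      apply le_of_eq
      have h2 : (2:ℝ≥0∞) ≠ 0 := by norm_num
      have h5 : (5:ℝ≥0∞) ≠ 0 := by norm_num
      rw [eLpNorm_eq_lintegral_rpow_enorm_toReal h5 (by simp) (f := fun t => eLpNorm (u t) 10 μ),
        eLpNorm_eq_lintegral_rpow_enorm_toReal h2 (by simp) (f := fun t => eLpNorm (w t) 2 μ),
        eLpNorm_eq_lintegral_rpow_enorm_toReal h5 (by simp) (f := fun t => eLpNorm (w t) 10 μ)]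
      simp only [ENNReal.toReal_ofNat, enorm_eq_self, ← ENNReal.rpow_mul]
      ring_nf

theorem integral_L2_abs_rpow_mul_le [IsFiniteMeasure μ] [IsFiniteMeasure ν] {u w : β → α → ℝ}
    (hu : Measurable (uncurry u)) (hw : Measurable (uncurry w)) {a θ : ℝ} (ha : 0 ≤ a)
    (hθ0 : 0 ≤ θ) (hθ1 : θ ≤ 1) (h : a + 4 * θ ≤ 4)
    (hu10 : ∀ᵐ t ∂ν, Integrable (fun x => |u t x| ^ (10:ℝ)) μ)
    (hw2 : ∀ᵐ t ∂ν, Integrable (fun x => |w t x| ^ (2:ℝ)) μ)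
    (hw10 : ∀ᵐ t ∂ν, Integrable (fun x => |w t x| ^ (10:ℝ)) μ)
    (hU : Integrable (fun t => ((∫ x, |u t x| ^ (10:ℝ) ∂μ) ^ ((1:ℝ) / 10)) ^ (5:ℝ)) ν)
    (hW2 : Integrable (fun t => ((∫ x, |w t x| ^ (2:ℝ) ∂μ) ^ ((1:ℝ) / 2)) ^ (2:ℝ)) ν)
    (hW10 : Integrable (fun t => ((∫ x, |w t x| ^ (10:ℝ) ∂μ) ^ ((1:ℝ) / 10)) ^ (5:ℝ)) ν) :
    ∫ t, (∫ x, (|u t x| ^ a * |w t x|) ^ (2:ℝ) ∂μ) ^ ((1:ℝ) / 2) ∂ν ≤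
      (μ univ ^ ((4 - a - 4 * θ) / 10) * ν univ ^ ((8 - 2 * a - 3 * θ) / 10)).toReal *
        ((∫ t, ((∫ x, |u t x| ^ (10:ℝ) ∂μ) ^ ((1:ℝ) / 10)) ^ (5:ℝ) ∂ν) ^ ((1:ℝ) / 5)) ^ a *
        ((∫ t, ((∫ x, |w t x| ^ (2:ℝ) ∂μ) ^ ((1:ℝ) / 2)) ^ (2:ℝ) ∂ν) ^ ((1:ℝ) / 2)) ^ θ *
        ((∫ t, ((∫ x, |w t x| ^ (10:ℝ) ∂μ) ^ ((1:ℝ) / 10)) ^ (5:ℝ) ∂ν) ^ ((1:ℝ) / 5))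
          ^ (1 - θ) := by
  have hX := eLpNorm_mixedNorm_lt_top hu (by norm_num) (by norm_num) hu10 hU
  have hY := eLpNorm_mixedNorm_lt_top hw (by norm_num) (by norm_num) hw2 hW2
  have hZ := eLpNorm_mixedNorm_lt_top hw (by norm_num) (by norm_num) hw10 hW10
  rw [integral_mixedNorm_eq hu (by norm_num) (by norm_num) hu10,
    integral_mixedNorm_eq hw (by norm_num) (by norm_num) hw2,
    integral_mixedNorm_eq hw (by norm_num) (by norm_num) hw10]
  simp only [ENNReal.ofReal_ofNat] at hX hY hZ ⊢
  have hL2 : ∀ t, (∫ x, (|u t x| ^ a * |w t x|) ^ (2:ℝ) ∂μ) ^ ((1:ℝ) / 2) =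
      (eLpNorm (fun x => |u t x| ^ a * w t x) 2 μ).toReal := fun t => by
    have hnorm := integral_abs_rpow_rpow_one_div (μ := μ) (f := fun x => |u t x| ^ a * w t x)
      (by fun_prop) two_pos
    rw [ENNReal.ofReal_ofNat] at hnorm
    rw [← hnorm]
    simp only [abs_mul, abs_of_nonneg (Real.rpow_nonneg (abs_nonneg _) _)]
  rw [integral_congr_ae (ae_of_all _ hL2)]
  set B := μ univ ^ ((4 - a - 4 * θ) / 10) * ν univ ^ ((8 - 2 * a - 3 * θ) / 10) *
    eLpNorm (fun t => eLpNorm (u t) 10 μ) 5 ν ^ a * eLpNorm (fun t => eLpNorm (w t) 2 μ) 2 ν ^ θ *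
    eLpNorm (fun t => eLpNorm (w t) 10 μ) 5 ν ^ (1 - θ) with hB_def
  have hest : ∫⁻ t, eLpNorm (fun x => |u t x| ^ a * w t x) 2 μ ∂ν ≤ B :=
    lintegral_eLpNorm_abs_rpow_mul_le hu hw ha hθ0 hθ1 h
  have hB : B ≠ ∞ :=
    ENNReal.mul_ne_top (ENNReal.mul_ne_top (ENNReal.mul_ne_top (ENNReal.mul_ne_top
      (ENNReal.rpow_ne_top_of_nonneg (by linarith) (measure_ne_top μ univ))
      (ENNReal.rpow_ne_top_of_nonneg (by linarith) (measure_ne_top ν univ)))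
      (ENNReal.rpow_ne_top_of_nonneg ha hX.ne))
      (ENNReal.rpow_ne_top_of_nonneg hθ0 hY.ne))
      (ENNReal.rpow_ne_top_of_nonneg (by linarith) hZ.ne)
  calc _ ≤ _ := integral_toReal_le_toReal_lintegral (ne_top_of_le_ne_top hB hest)
    _ ≤ B.toReal := ENNReal.toReal_mono hB hest
    _ = _ := by simp only [hB_def, ENNReal.toReal_mul, ← ENNReal.toReal_rpow]

end MixedNorm

theorem sub_one_add_four_mul_le_four {p : ℝ} (hp1 : 1 < p) (hp5 : p < 5) :
    p - 1 + 4 * ((5 - p) / (4 * p)) ≤ 4 := by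
  have hp : 0 < p := by linarith
  have h : p - 1 + 4 * ((5 - p) / (4 * p)) = 4 - (p - 1) * (5 - p) / p := by field_simp; ring
  have := div_nonneg (mul_nonneg (by linarith : 0 ≤ p - 1) (by linarith : 0 ≤ 5 - p)) hp.le
  linarith

/-- Let `(Ω, μ)` be a finite measure space, `T > 0`, `1 < p < 5`, and
`θ = (5 − p)/(4p)`.  Then there is `C > 0`, depending only on `T`, `μ(Ω)` and `p`, such
that for all measurable `u ∈ L⁵(0,T;L¹⁰(Ω))` and
`w ∈ L²(0,T;L²(Ω)) ∩ L⁵(0,T;L¹⁰(Ω))` one has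
`∫₀^T ‖ |u(·,t)|^{p−1} w(·,t) ‖_{L²(Ω)} dt ≤
  C ‖u‖_{L⁵L¹⁰}^{p−1} ‖w‖_{L²L²}^θ ‖w‖_{L⁵L¹⁰}^{1−θ}`. -/
theorem stmt_7 {Ω : Type*} [MeasurableSpace Ω] (μ : Measure Ω) [IsFiniteMeasure μ]
    (T p : ℝ) (hT : 0 < T) (hp1 : 1 < p) (hp5 : p < 5) :
    ∃ C : ℝ, 0 < C ∧ ∀ u w : ℝ → Ω → ℝ,
      Measurable (Function.uncurry u) → Measurable (Function.uncurry w) →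
      (∀ t ∈ Ioc (0:ℝ) T, Integrable (fun x => |u t x| ^ (10:ℝ)) μ) →
      (∀ t ∈ Ioc (0:ℝ) T, Integrable (fun x => |w t x| ^ (2:ℝ)) μ) →
      (∀ t ∈ Ioc (0:ℝ) T, Integrable (fun x => |w t x| ^ (10:ℝ)) μ) →
      IntegrableOn
        (fun t => ((∫ x, |u t x| ^ (10:ℝ) ∂μ) ^ ((1:ℝ)/10)) ^ (5:ℝ)) (Ioc (0:ℝ) T) →
      IntegrableOn
        (fun t => ((∫ x, |w t x| ^ (2:ℝ) ∂μ) ^ ((1:ℝ)/2)) ^ (2:ℝ)) (Ioc (0:ℝ) T) →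
      IntegrableOn
        (fun t => ((∫ x, |w t x| ^ (10:ℝ) ∂μ) ^ ((1:ℝ)/10)) ^ (5:ℝ)) (Ioc (0:ℝ) T) →
      (∫ t in Ioc (0:ℝ) T, (∫ x, (|u t x| ^ (p - 1) * |w t x|) ^ (2:ℝ) ∂μ) ^ ((1:ℝ)/2))
        ≤ C *
          ((∫ t in Ioc (0:ℝ) T,
              ((∫ x, |u t x| ^ (10:ℝ) ∂μ) ^ ((1:ℝ)/10)) ^ (5:ℝ)) ^ ((1:ℝ)/5)) ^ (p - 1) *
          ((∫ t in Ioc (0:ℝ) T,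
              ((∫ x, |w t x| ^ (2:ℝ) ∂μ) ^ ((1:ℝ)/2)) ^ (2:ℝ)) ^ ((1:ℝ)/2))
            ^ ((5 - p) / (4 * p)) *
          ((∫ t in Ioc (0:ℝ) T,
              ((∫ x, |w t x| ^ (10:ℝ) ∂μ) ^ ((1:ℝ)/10)) ^ (5:ℝ)) ^ ((1:ℝ)/5))
            ^ (1 - (5 - p) / (4 * p)) := by
  have hθ0 : 0 ≤ (5 - p) / (4 * p) := div_nonneg (by linarith) (by linarith)
  have hθ1 : (5 - p) / (4 * p) ≤ 1 := (div_le_one (by linarith)).2 (by linarith)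
  have hpθ := sub_one_add_four_mul_le_four hp1 hp5
  refine ⟨((μ univ).toReal + 1) ^ ((4 - (p - 1) - 4 * ((5 - p) / (4 * p))) / 10) *
    T ^ ((8 - 2 * (p - 1) - 3 * ((5 - p) / (4 * p))) / 10), by positivity, ?_⟩
  intro u w hu hw hu10 hw2 hw10 hU hW2 hW10
  refine (integral_L2_abs_rpow_mul_le hu hw (by linarith) hθ0 hθ1 hpθ
    (ae_restrict_of_forall_mem measurableSet_Ioc hu10)
    (ae_restrict_of_forall_mem measurableSet_Ioc hw2)
    (ae_restrict_of_forall_mem measurableSet_Ioc hw10) hU hW2 hW10).trans ?_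
  rw [ENNReal.toReal_mul, ← ENNReal.toReal_rpow, ← ENNReal.toReal_rpow,
    Measure.restrict_apply_univ, Real.volume_Ioc, sub_zero, ENNReal.toReal_ofReal hT.le]
  gcongr <;> linarith
end

section
/- Let (X, μ) be a finite measure space with μ(X) > 0, let A > 0, and let a : X → ℝ be measurable with 0 ≤ a(x) ≤ A for all x. Let g : ℝ → ℝ be continuous with g(s)·s ≥ 0 for all s, and let h₀ : ℝ → ℝ be concave and monotone increasing with h₀(g(s)·s) ≥ s² + g(s)² for all |s| ≤ 1. Let v : X → ℝ be measurable with |v(x)| ≤ 1 for all x ∈ X. Then ∫_X a(x) ( g(v(x))² + v(x)² ) dμ ≤ (1 + A) · μ(X) · h₀( (1/μ(X)) ∫_X a(x) g(v(x)) v(x) dμ ). -/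
/-!
With `w = g(v) v ≥ 0`, the hypothesis on `h₀` gives `a (g(v)² + v²) ≤ a h₀(w)` pointwise. A concave
`h₀` with `h₀ 0 ≥ 0` satisfies `t h₀(y) ≤ h₀(t y)` for `t ∈ [0, 1]`; taking `t = a / (1 + A)` moves
the weight inside: `a h₀(w) ≤ (1 + A) h₀(a w / (1 + A))`. Jensen's inequality for `μ / μ(X)` then
applies, and monotonicity of `h₀` drops the factor `1 / (1 + A) ≤ 1` from the nonnegative argument.
-/

open MeasureTheory Set

theorem ConcaveOn.smul_le_map_smul {E : Type*} [AddCommGroup E] [Module ℝ E] {s : Set E}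
    {f : E → ℝ} (hf : ConcaveOn ℝ s f) (h0s : (0 : E) ∈ s) (hf0 : 0 ≤ f 0) {y : E} (hys : y ∈ s)
    {t : ℝ} (ht : t ∈ Icc (0 : ℝ) 1) : t * f y ≤ f (t • y) := by
  have hconc := hf.2 hys h0s ht.1 (sub_nonneg.2 ht.2) (add_sub_cancel t 1)
  simp only [smul_zero, add_zero, smul_eq_mul] at hconc
  nlinarith [mul_nonneg (sub_nonneg.2 ht.2) hf0]

theorem ConcaveOn.mul_le_mul_map_mul_div {f : ℝ → ℝ} (hf : ConcaveOn ℝ univ f) (hf0 : 0 ≤ f 0)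
    {a c : ℝ} (ha : 0 ≤ a) (hac : a ≤ c) (y : ℝ) : a * f y ≤ c * f (a * y / c) := by
  rcases (ha.trans hac).eq_or_lt with rfl | hc
  · simp [le_antisymm hac ha]
  have ht : a / c ∈ Icc (0 : ℝ) 1 := ⟨div_nonneg ha hc.le, (div_le_one hc).2 hac⟩
  calc a * f y = c * (a / c * f y) := by field_simp
    _ ≤ c * f ((a / c) • y) :=
        mul_le_mul_of_nonneg_left (hf.smul_le_map_smul (mem_univ 0) hf0 (mem_univ y) ht) hc.le
    _ = c * f (a * y / c) := by rw [smul_eq_mul, div_mul_eq_mul_div]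

section

variable {X : Type*} [MeasurableSpace X] {μ : Measure X} [IsFiniteMeasure μ]

theorem IsCompact.integrable_comp {E : Type*} [TopologicalSpace E] [MeasurableSpace E]
    [OpensMeasurableSpace E] {K : Set E} (hK : IsCompact K) {F : E → ℝ} (hF : Continuous F)
    {u : X → E} (hu : Measurable u) (huK : ∀ x, u x ∈ K) : Integrable (fun x => F (u x)) μ := by
  obtain ⟨C, hC⟩ := hK.exists_bound_of_continuousOn hF.continuousOn
  exact .of_bound (hF.measurable.comp hu).aestronglyMeasurable C (ae_of_all _ fun x => hC _ (huK x))

theorem ConcaveOn.integral_comp_le_measureReal_mul {f : ℝ → ℝ} (hf : ConcaveOn ℝ univ f)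
    {φ : X → ℝ} (hφ : Integrable φ μ) (hfφ : Integrable (fun x => f (φ x)) μ) :
    ∫ x, f (φ x) ∂μ ≤ μ.real univ * f ((μ.real univ)⁻¹ * ∫ x, φ x ∂μ) := by
  rcases eq_zero_or_neZero μ with rfl | _
  · simp
  have hjensen := hf.le_map_average (hf.continuousOn isOpen_univ) isClosed_univ
    (ae_of_all _ fun x => mem_univ (φ x)) hφ hfφ
  rwa [average_eq, average_eq, smul_eq_mul, smul_eq_mul,
    inv_mul_le_iff₀ (measureReal_univ_pos (μ := μ))] at hjensen

end

theorem stmt_15_general {X : Type*} [MeasurableSpace X] (μ : Measure X) [IsFiniteMeasure μ]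
    (A : ℝ) (hA : 0 < A)
    (a : X → ℝ) (ha : Measurable a) (ha0 : ∀ x, 0 ≤ a x) (haA : ∀ x, a x ≤ A)
    (g : ℝ → ℝ) (hg : Continuous g) (hgsign : ∀ s : ℝ, 0 ≤ g s * s)
    (h₀ : ℝ → ℝ) (hconc : ConcaveOn ℝ Set.univ h₀) (hmono : Monotone h₀)
    (hh₀ : ∀ s : ℝ, |s| ≤ 1 → s ^ 2 + (g s) ^ 2 ≤ h₀ (g s * s))
    (v : X → ℝ) (hv : Measurable v) (hv1 : ∀ x, |v x| ≤ 1) :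
    (∫ x, a x * ((g (v x)) ^ 2 + (v x) ^ 2) ∂μ) ≤
      (1 + A) * (μ Set.univ).toReal *
        h₀ ((1 / (μ Set.univ).toReal) * ∫ x, a x * (g (v x) * v x) ∂μ) := by
  have hA1 : 0 < 1 + A := by linarith
  have hh₀c : Continuous h₀ := continuousOn_univ.1 (hconc.continuousOn isOpen_univ)
  have hh₀0 : 0 ≤ h₀ 0 := by simpa using (hh₀ 0 (by simp)).trans' (by positivity)
  have hint : ∀ F : ℝ × ℝ → ℝ, Continuous F → Integrable (fun x => F (a x, v x)) μ :=
    fun F hF => (isCompact_Icc.prod isCompact_Icc).integrable_comp hF (ha.prodMk hv)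
      fun x => ⟨⟨ha0 x, haA x⟩, abs_le.1 (hv1 x)⟩
  set φ : X → ℝ := fun x => a x * (g (v x) * v x) / (1 + A)
  have hpointwise : ∀ x, a x * (g (v x) ^ 2 + v x ^ 2) ≤ (1 + A) * h₀ (φ x) := fun x =>
    calc a x * (g (v x) ^ 2 + v x ^ 2) ≤ a x * h₀ (g (v x) * v x) := by
          rw [add_comm]; exact mul_le_mul_of_nonneg_left (hh₀ _ (hv1 x)) (ha0 x)
      _ ≤ (1 + A) * h₀ (φ x) :=
          hconc.mul_le_mul_map_mul_div hh₀0 (ha0 x) (by linarith [haA x]) _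
  have hφ_int : Integrable φ μ := hint (fun p => p.1 * (g p.2 * p.2) / (1 + A)) (by fun_prop)
  have hh₀φ_int : Integrable (fun x => h₀ (φ x)) μ :=
    hint (fun p => h₀ (p.1 * (g p.2 * p.2) / (1 + A))) (by fun_prop)
  have hφ_le : ∫ x, φ x ∂μ ≤ ∫ x, a x * (g (v x) * v x) ∂μ := by
    rw [integral_div]
    exact div_le_self (integral_nonneg fun x => mul_nonneg (ha0 x) (hgsign _)) (by linarith)
  calc ∫ x, a x * (g (v x) ^ 2 + v x ^ 2) ∂μ
      ≤ ∫ x, (1 + A) * h₀ (φ x) ∂μ :=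
        integral_mono (hint (fun p => p.1 * (g p.2 ^ 2 + p.2 ^ 2)) (by fun_prop))
          (hh₀φ_int.const_mul _) hpointwise
    _ = (1 + A) * ∫ x, h₀ (φ x) ∂μ := integral_const_mul _ _
    _ ≤ (1 + A) * (μ.real univ * h₀ ((μ.real univ)⁻¹ * ∫ x, φ x ∂μ)) :=
        mul_le_mul_of_nonneg_left (hconc.integral_comp_le_measureReal_mul hφ_int hh₀φ_int) hA1.le
    _ ≤ (1 + A) * (μ.real univ * h₀ ((μ.real univ)⁻¹ * ∫ x, a x * (g (v x) * v x) ∂μ)) := by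
        gcongr (1 + A) * (μ.real univ * ?_)
        exact hmono (mul_le_mul_of_nonneg_left hφ_le (by positivity))
    _ = _ := by rw [one_div, mul_assoc, measureReal_def]

/-- Let `(X, μ)` be a finite measure space with `μ X > 0`, `A > 0`,
and `a : X → ℝ` measurable with `0 ≤ a ≤ A`.  Let `g : ℝ → ℝ` be continuous with
`g(s)·s ≥ 0`, and `h₀ : ℝ → ℝ` concave and monotone increasing with
`h₀(g(s)·s) ≥ s² + g(s)²` for `|s| ≤ 1`.  Let `v : X → ℝ` be measurable with
`|v| ≤ 1`.  Then
`∫ a (g(v)² + v²) dμ ≤ (1 + A) μ(X) h₀( (1/μ(X)) ∫ a g(v) v dμ )`. -/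
theorem stmt_15 {X : Type*} [MeasurableSpace X] (μ : Measure X) [IsFiniteMeasure μ]
    (hμ : 0 < (μ Set.univ).toReal)
    (A : ℝ) (hA : 0 < A)
    (a : X → ℝ) (ha : Measurable a) (ha0 : ∀ x, 0 ≤ a x) (haA : ∀ x, a x ≤ A)
    (g : ℝ → ℝ) (hg : Continuous g) (hgsign : ∀ s : ℝ, 0 ≤ g s * s)
    (h₀ : ℝ → ℝ) (hconc : ConcaveOn ℝ Set.univ h₀) (hmono : Monotone h₀)
    (hh₀ : ∀ s : ℝ, |s| ≤ 1 → s ^ 2 + (g s) ^ 2 ≤ h₀ (g s * s))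
    (v : X → ℝ) (hv : Measurable v) (hv1 : ∀ x, |v x| ≤ 1) :
    (∫ x, a x * ((g (v x)) ^ 2 + (v x) ^ 2) ∂μ) ≤
      (1 + A) * (μ Set.univ).toReal *
        h₀ ((1 / (μ Set.univ).toReal) * ∫ x, a x * (g (v x) * v x) ∂μ) :=
  stmt_15_general μ A hA a ha ha0 haA g hg hgsign h₀ hconc hmono hh₀ v hv hv1
end

section
/- Let (X, μ) be a measure space, let A > 0, and let a : X → ℝ be measurable with 0 ≤ a(x) ≤ A for all x. Let r > 1, p₀ > 2r, m̃, M̃ > 0, and let g : ℝ → ℝ be a measurable function satisfying m̃ |s|^{r+1} ≤ g(s)·s ≤ M̃ |s|^{r+1} for all |s| ≥ 1. Let D₀ > 0 and let v : X → ℝ be measurable with (∫_X |v|^{p₀} dμ)^{1/p₀} ≤ D₀, and set E = { x ∈ X : |v(x)| > 1 }. Then there is a constant C > 0, depending only on m̃, M̃, A, r and p₀, such that ∫_E a(x) ( v(x)² + g(v(x))² ) dμ ≤ C · D₀^{p₀(r−1)/(p₀−r−1)} · ( ∫_E a(x) g(v(x)) v(x) dμ )^{(p₀−2r)/(p₀−r−1)}.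 -/
/-!
On `E` we have `|v| ≥ 1`, so the growth bounds on `g` give `v² + g(v)² ≤ (1 + M²)|v|^{2r}` and
`m|v|^{r+1} ≤ g(v)v`. Writing `2r = θ(r+1) + (1-θ)p₀` with `θ = (p₀-2r)/(p₀-r-1) ∈ (0,1)`,
Hölder's inequality with exponents `1/θ, 1/(1-θ)` interpolates the `a`-weighted `2r`-moment of `v`
between its `(r+1)`-moment, which is at most `m⁻¹ ∫_E a g(v) v`, and its `p₀`-moment, which is at
most `A D₀^{p₀}`.
-/

open MeasureTheory

section Moments

variable {X : Type*} [MeasurableSpace X] {μ : Measure X}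

theorem MeasureTheory.Integrable.memLp_rpow {f : X → ℝ} (hf : Integrable f μ)
    (hf0 : 0 ≤ᵐ[μ] f) {θ : ℝ} (hθ : 0 < θ) :
    MemLp (fun x => f x ^ θ) (ENNReal.ofReal (1 / θ)) μ := by
  have h := (memLp_one_iff_integrable.2 hf).norm_rpow_div (ENNReal.ofReal θ)
  rw [ENNReal.toReal_ofReal hθ.le, ← ENNReal.ofReal_one, ← ENNReal.ofReal_div_of_pos hθ] at h
  refine h.ae_eq ?_
  filter_upwards [hf0] with x hx
  rw [Real.norm_of_nonneg hx]

theorem integral_rpow_mul_rpow_le {f h : X → ℝ} (hf0 : 0 ≤ᵐ[μ] f) (hh0 : 0 ≤ᵐ[μ] h)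
    (hf : Integrable f μ) (hh : Integrable h μ) {θ : ℝ} (hθ0 : 0 < θ) (hθ1 : θ < 1) :
    ∫ x, f x ^ θ * h x ^ (1 - θ) ∂μ ≤ (∫ x, f x ∂μ) ^ θ * (∫ x, h x ∂μ) ^ (1 - θ) := by
  have hconj : (1 / θ).HolderConjugate (1 / (1 - θ)) :=
    Real.holderConjugate_iff.2 ⟨by rw [lt_div_iff₀ hθ0]; linarith, by simp⟩
  have key := integral_mul_le_Lp_mul_Lq_of_nonneg hconj
    (hf0.mono fun x hx => Real.rpow_nonneg hx θ) (hh0.mono fun x hx => Real.rpow_nonneg hx _)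
    (hf.memLp_rpow hf0 hθ0) (hh.memLp_rpow hh0 (sub_pos.2 hθ1))
  have hinv (u : X → ℝ) (t : ℝ) (hu : 0 ≤ᵐ[μ] u) (ht : t ≠ 0) :
      ∫ x, (u x ^ t) ^ (1 / t) ∂μ = ∫ x, u x ∂μ :=
    integral_congr_ae <| hu.mono fun x (hx : 0 ≤ u x) => by
      simp only [← Real.rpow_mul hx, mul_one_div_cancel ht, Real.rpow_one]
  rwa [hinv f θ hf0 hθ0.ne', hinv h _ hh0 (sub_pos.2 hθ1).ne', one_div_one_div,
    one_div_one_div] at key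

theorem integral_mul_rpow_interpolation_le {w u : X → ℝ} (hw : ∀ x, 0 ≤ w x)
    (hu : ∀ x, 0 ≤ u x) {p q θ : ℝ} (hp : 0 ≤ p) (hq : 0 ≤ q) (hθ0 : 0 < θ) (hθ1 : θ < 1)
    (hwp : Integrable (fun x => w x * u x ^ p) μ)
    (hwq : Integrable (fun x => w x * u x ^ q) μ) :
    ∫ x, w x * u x ^ (θ * p + (1 - θ) * q) ∂μ ≤
      (∫ x, w x * u x ^ p ∂μ) ^ θ * (∫ x, w x * u x ^ q ∂μ) ^ (1 - θ) := by
  have h1θ : 0 ≤ 1 - θ := by linarith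
  have hsplit : ∀ x, w x * u x ^ (θ * p + (1 - θ) * q) =
      (w x * u x ^ p) ^ θ * (w x * u x ^ q) ^ (1 - θ) := fun x => by
    have hup := Real.rpow_nonneg (hu x) p
    have huq := Real.rpow_nonneg (hu x) q
    rw [Real.mul_rpow (hw x) hup, Real.mul_rpow (hw x) huq, ← Real.rpow_mul (hu x),
      ← Real.rpow_mul (hu x), mul_mul_mul_comm, ← Real.rpow_add_of_nonneg (hw x) hθ0.le h1θ,
      ← Real.rpow_add_of_nonneg (hu x) (by positivity) (by positivity), add_sub_cancel,
      Real.rpow_one, mul_comm p, mul_comm q]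
  simp only [hsplit]
  exact integral_rpow_mul_rpow_le
    (ae_of_all _ fun x => mul_nonneg (hw x) (Real.rpow_nonneg (hu x) p))
    (ae_of_all _ fun x => mul_nonneg (hw x) (Real.rpow_nonneg (hu x) q)) hwp hwq hθ0 hθ1

theorem integrable_mul_rpow_of_le {w u : X → ℝ} (hw : Measurable w) (hw0 : ∀ x, 0 ≤ w x)
    (hu : Measurable u) (hu1 : ∀ᵐ x ∂μ, 1 ≤ u x) {c p : ℝ} (hcp : c ≤ p)
    (hwp : Integrable (fun x => w x * u x ^ p) μ) :
    Integrable (fun x => w x * u x ^ c) μ := by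
  refine hwp.mono' (hw.mul (hu.pow_const c)).aestronglyMeasurable ?_
  filter_upwards [hu1] with x hx
  rw [Real.norm_of_nonneg (mul_nonneg (hw0 x) (by positivity))]
  exact mul_le_mul_of_nonneg_left (Real.rpow_le_rpow_of_exponent_le hx hcp) (hw0 x)

end Moments

theorem abs_le_mul_rpow_of_mul_le {s y M r : ℝ} (hs : 0 < |s|) (hys : 0 ≤ y * s)
    (h : y * s ≤ M * |s| ^ (r + 1)) : |y| ≤ M * |s| ^ r := by
  refine le_of_mul_le_mul_right ?_ hs
  rwa [← abs_mul, abs_of_nonneg hys, mul_assoc, ← Real.rpow_add_one hs.ne']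

theorem sq_add_sq_le_mul_rpow {s y M r : ℝ} (hr : 1 ≤ r) (hs : 1 ≤ |s|) (hys : 0 ≤ y * s)
    (h : y * s ≤ M * |s| ^ (r + 1)) : s ^ 2 + y ^ 2 ≤ (1 + M ^ 2) * |s| ^ (2 * r) := by
  have hs0 : 0 < |s| := by linarith
  have hs2 : s ^ 2 ≤ |s| ^ (2 * r) := by
    rw [← sq_abs, ← Real.rpow_two]
    exact Real.rpow_le_rpow_of_exponent_le hs (by linarith)
  have hy2 : y ^ 2 ≤ M ^ 2 * |s| ^ (2 * r) := by
    rw [← sq_abs, mul_comm 2 r, Real.rpow_mul hs0.le, Real.rpow_two, ← mul_pow]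
    exact pow_le_pow_left₀ (abs_nonneg y) (abs_le_mul_rpow_of_mul_le hs0 hys h) 2
  linarith

section Damping

variable {X : Type*} [MeasurableSpace X] {μ : Measure X} {a v : X → ℝ} {g : ℝ → ℝ}
  {m M r : ℝ}

theorem integral_mul_sq_add_sq_le (ha0 : ∀ x, 0 ≤ a x)
    (hgb : ∀ s, 1 ≤ |s| → m * |s| ^ (r + 1) ≤ g s * s ∧ g s * s ≤ M * |s| ^ (r + 1))
    (hm : 0 ≤ m) (hr : 1 ≤ r) (hv1 : ∀ᵐ x ∂μ, 1 ≤ |v x|)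
    (hv2r : Integrable (fun x => a x * |v x| ^ (2 * r)) μ) :
    ∫ x, a x * (v x ^ 2 + g (v x) ^ 2) ∂μ ≤ (1 + M ^ 2) * ∫ x, a x * |v x| ^ (2 * r) ∂μ := by
  rw [← integral_const_mul]
  refine integral_mono_of_nonneg (ae_of_all _ fun x => mul_nonneg (ha0 x) (by positivity))
    (hv2r.const_mul _) ?_
  filter_upwards [hv1] with x hx
  obtain ⟨hlow, hup⟩ := hgb (v x) hx
  have hgv : 0 ≤ g (v x) * v x := le_trans (mul_nonneg hm (by positivity)) hlow
  calc a x * (v x ^ 2 + g (v x) ^ 2) ≤ a x * ((1 + M ^ 2) * |v x| ^ (2 * r)) :=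
        mul_le_mul_of_nonneg_left (sq_add_sq_le_mul_rpow hr hx hgv hup) (ha0 x)
    _ = (1 + M ^ 2) * (a x * |v x| ^ (2 * r)) := by ring

theorem mul_integral_mul_rpow_le (ha : Measurable a) (ha0 : ∀ x, 0 ≤ a x) (hv : Measurable v)
    (hg : Measurable g)
    (hgb : ∀ s, 1 ≤ |s| → m * |s| ^ (r + 1) ≤ g s * s ∧ g s * s ≤ M * |s| ^ (r + 1))
    (hm : 0 ≤ m) (hv1 : ∀ᵐ x ∂μ, 1 ≤ |v x|)
    (hvr : Integrable (fun x => a x * |v x| ^ (r + 1)) μ) :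
    m * ∫ x, a x * |v x| ^ (r + 1) ∂μ ≤ ∫ x, a x * (g (v x) * v x) ∂μ := by
  have hJ : Integrable (fun x => a x * (g (v x) * v x)) μ := by
    refine (hvr.const_mul M).mono' (ha.mul ((hg.comp hv).mul hv)).aestronglyMeasurable ?_
    filter_upwards [hv1] with x hx
    obtain ⟨hlow, hup⟩ := hgb (v x) hx
    rw [Real.norm_of_nonneg (mul_nonneg (ha0 x) (le_trans (mul_nonneg hm (by positivity)) hlow))]
    nlinarith [ha0 x]
  rw [← integral_const_mul]
  refine integral_mono_ae (hvr.const_mul m) hJ ?_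
  filter_upwards [hv1] with x hx
  nlinarith [(hgb (v x) hx).1, ha0 x]

theorem integral_mul_sq_add_sq_le_interpolation {p θ : ℝ} (ha : Measurable a)
    (ha0 : ∀ x, 0 ≤ a x) (hv : Measurable v) (hg : Measurable g)
    (hgb : ∀ s, 1 ≤ |s| → m * |s| ^ (r + 1) ≤ g s * s ∧ g s * s ≤ M * |s| ^ (r + 1))
    (hm : 0 < m) (hr : 1 ≤ r) (hθ0 : 0 < θ) (hθ1 : θ < 1)
    (hexp : θ * (r + 1) + (1 - θ) * p = 2 * r) (hv1 : ∀ᵐ x ∂μ, 1 ≤ |v x|)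
    (hvp : Integrable (fun x => a x * |v x| ^ p) μ) :
    ∫ x, a x * (v x ^ 2 + g (v x) ^ 2) ∂μ ≤
      (1 + M ^ 2) * ((∫ x, a x * (g (v x) * v x) ∂μ) / m) ^ θ *
        (∫ x, a x * |v x| ^ p ∂μ) ^ (1 - θ) := by
  have hrp : r + 1 ≤ p := by nlinarith
  have integrable_of_le {c : ℝ} (hc : c ≤ p) : Integrable (fun x => a x * |v x| ^ c) μ :=
    integrable_mul_rpow_of_le ha ha0 hv.abs hv1 hc hvp
  have hvr := integrable_of_le hrp
  have hI1 : ∫ x, a x * |v x| ^ (r + 1) ∂μ ≤ (∫ x, a x * (g (v x) * v x) ∂μ) / m := by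
    rw [le_div_iff₀ hm, mul_comm]
    exact mul_integral_mul_rpow_le ha ha0 hv hg hgb hm.le hv1 hvr
  have hinterp := integral_mul_rpow_interpolation_le (μ := μ) ha0 (fun x => abs_nonneg (v x))
    (by linarith) (by linarith) hθ0 hθ1 hvr hvp
  rw [hexp] at hinterp
  calc ∫ x, a x * (v x ^ 2 + g (v x) ^ 2) ∂μ
      ≤ (1 + M ^ 2) * ∫ x, a x * |v x| ^ (2 * r) ∂μ :=
        integral_mul_sq_add_sq_le ha0 hgb hm.le hr hv1 (integrable_of_le (by nlinarith))
    _ ≤ (1 + M ^ 2) * ((∫ x, a x * |v x| ^ (r + 1) ∂μ) ^ θ *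
          (∫ x, a x * |v x| ^ p ∂μ) ^ (1 - θ)) := by gcongr
    _ ≤ (1 + M ^ 2) * (((∫ x, a x * (g (v x) * v x) ∂μ) / m) ^ θ *
          (∫ x, a x * |v x| ^ p ∂μ) ^ (1 - θ)) := by
        have hI1nn : 0 ≤ ∫ x, a x * |v x| ^ (r + 1) ∂μ :=
          integral_nonneg fun x => mul_nonneg (ha0 x) (by positivity)
        have hIpnn : 0 ≤ ∫ x, a x * |v x| ^ p ∂μ :=
          integral_nonneg fun x => mul_nonneg (ha0 x) (by positivity)
        gcongr
    _ = _ := by ring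

theorem setIntegral_mul_rpow_le {s : Set X} {A D p : ℝ} (ha0 : ∀ x, 0 ≤ a x)
    (haA : ∀ x, a x ≤ A) (hA : 0 ≤ A) (hp : 0 < p) (hD : 0 ≤ D)
    (hvint : Integrable (fun x => |v x| ^ p) μ) (hvD : (∫ x, |v x| ^ p ∂μ) ^ (1 / p) ≤ D) :
    ∫ x in s, a x * |v x| ^ p ∂μ ≤ A * D ^ p := by
  have hnorm : ∫ x, |v x| ^ p ∂μ ≤ D ^ p := by
    rw [one_div] at hvD
    exact (Real.rpow_inv_le_iff_of_pos (integral_nonneg fun x => by positivity) hD hp).1 hvD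
  calc ∫ x in s, a x * |v x| ^ p ∂μ ≤ ∫ x in s, A * |v x| ^ p ∂μ :=
        integral_mono_of_nonneg (ae_of_all _ fun x => mul_nonneg (ha0 x) (by positivity))
          (hvint.const_mul A).integrableOn
          (ae_of_all _ fun x => mul_le_mul_of_nonneg_right (haA x) (by positivity))
    _ ≤ ∫ x, A * |v x| ^ p ∂μ :=
        setIntegral_le_integral (hvint.const_mul A) (ae_of_all _ fun x => by positivity)
    _ ≤ A * D ^ p := by rw [integral_const_mul]; gcongr

end Damping

theorem stmt_16_general (m M A r p₀ : ℝ)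
    (hm : 0 < m) (hA : 0 < A) (hr : 1 < r) (hp₀ : 2 * r < p₀) :
    ∃ C : ℝ, 0 < C ∧
      ∀ (X : Type*) [MeasurableSpace X] (μ : Measure X)
        (a : X → ℝ), Measurable a → (∀ x, 0 ≤ a x) → (∀ x, a x ≤ A) →
      ∀ g : ℝ → ℝ, Measurable g →
        (∀ s : ℝ, 1 ≤ |s| → m * |s| ^ (r + 1) ≤ g s * s ∧ g s * s ≤ M * |s| ^ (r + 1)) →
      ∀ D₀ : ℝ, 0 < D₀ →
      ∀ v : X → ℝ, Measurable v → Integrable (fun x => |v x| ^ p₀) μ →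
        (∫ x, |v x| ^ p₀ ∂μ) ^ (1 / p₀) ≤ D₀ →
      (∫ x in {x | 1 < |v x|}, a x * ((v x) ^ 2 + (g (v x)) ^ 2) ∂μ) ≤
        C * D₀ ^ (p₀ * (r - 1) / (p₀ - r - 1)) *
          (∫ x in {x | 1 < |v x|}, a x * (g (v x) * v x) ∂μ)
            ^ ((p₀ - 2 * r) / (p₀ - r - 1)) := by
  have hden : 0 < p₀ - r - 1 := by linarith
  set θ := (p₀ - 2 * r) / (p₀ - r - 1) with hθ
  have hθ0 : 0 < θ := div_pos (by linarith) hden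
  have hθ1 : θ < 1 := (div_lt_one hden).2 (by linarith)
  have hexp : θ * (r + 1) + (1 - θ) * p₀ = 2 * r := by rw [hθ]; field_simp; ring
  have hD₀exp : p₀ * (r - 1) / (p₀ - r - 1) = p₀ * (1 - θ) := by rw [hθ]; field_simp; ring
  refine ⟨(1 + M ^ 2) * m ^ (-θ) * A ^ (1 - θ), by positivity, ?_⟩
  intro X _ μ a ha ha0 haA g hg hgb D₀ hD₀ v hv hvint hvD
  set E : Set X := {x | 1 < |v x|}
  have hv1 : ∀ᵐ x ∂μ.restrict E, 1 ≤ |v x| :=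
    (ae_restrict_mem (measurableSet_lt measurable_const hv.abs)).mono fun _ hx => hx.le
  have hvp : Integrable (fun x => a x * |v x| ^ p₀) (μ.restrict E) :=
    hvint.integrableOn.bdd_mul ha.aestronglyMeasurable
      (ae_of_all _ fun x => by rw [Real.norm_of_nonneg (ha0 x)]; exact haA x)
  have hIp : ∫ x in E, a x * |v x| ^ p₀ ∂μ ≤ A * D₀ ^ p₀ :=
    setIntegral_mul_rpow_le ha0 haA hA.le (by linarith) hD₀.le hvint hvD
  have hJ : 0 ≤ ∫ x in E, a x * (g (v x) * v x) ∂μ := by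
    refine integral_nonneg_of_ae (hv1.mono fun x hx => mul_nonneg (ha0 x) ?_)
    exact le_trans (by positivity) (hgb (v x) hx).1
  have hIpnn : 0 ≤ ∫ x in E, a x * |v x| ^ p₀ ∂μ :=
    integral_nonneg fun x => mul_nonneg (ha0 x) (by positivity)
  calc ∫ x in E, a x * (v x ^ 2 + g (v x) ^ 2) ∂μ
      ≤ (1 + M ^ 2) * ((∫ x in E, a x * (g (v x) * v x) ∂μ) / m) ^ θ *
          (∫ x in E, a x * |v x| ^ p₀ ∂μ) ^ (1 - θ) :=
        integral_mul_sq_add_sq_le_interpolation ha ha0 hv hg hgb hm hr.le hθ0 hθ1 hexp hv1 hvp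
    _ ≤ (1 + M ^ 2) * ((∫ x in E, a x * (g (v x) * v x) ∂μ) / m) ^ θ *
          (A * D₀ ^ p₀) ^ (1 - θ) := by gcongr
    _ = _ := by
        rw [hD₀exp, Real.div_rpow hJ hm.le, Real.mul_rpow hA.le (by positivity),
          ← Real.rpow_mul hD₀.le, Real.rpow_neg hm.le]
        ring

/-- (Superlinear damping at infinity.)  Let `r > 1`, `p₀ > 2r`,
`m, M, A > 0`.  There is a constant `C > 0`, depending only on `m, M, A, r, p₀`,
such that for every measure space `(X, μ)`, every measurable `a : X → ℝ` with
`0 ≤ a ≤ A`, every measurable `g : ℝ → ℝ` with `m|s|^{r+1} ≤ g(s)s ≤ M|s|^{r+1}` for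
`|s| ≥ 1`, every `D₀ > 0` and every measurable `v ∈ L^{p₀}(μ)` with
`‖v‖_{L^{p₀}} ≤ D₀`, setting `E = {x : |v x| > 1}`, one has
`∫_E a (v² + g(v)²) dμ ≤ C · D₀^{p₀(r−1)/(p₀−r−1)} · (∫_E a g(v) v dμ)^{(p₀−2r)/(p₀−r−1)}`. -/
theorem stmt_16 (m M A r p₀ : ℝ)
    (hm : 0 < m) (hM : 0 < M) (hA : 0 < A) (hr : 1 < r) (hp₀ : 2 * r < p₀) :
    ∃ C : ℝ, 0 < C ∧
      ∀ (X : Type*) [MeasurableSpace X] (μ : Measure X)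
        (a : X → ℝ), Measurable a → (∀ x, 0 ≤ a x) → (∀ x, a x ≤ A) →
      ∀ g : ℝ → ℝ, Measurable g →
        (∀ s : ℝ, 1 ≤ |s| → m * |s| ^ (r + 1) ≤ g s * s ∧ g s * s ≤ M * |s| ^ (r + 1)) →
      ∀ D₀ : ℝ, 0 < D₀ →
      ∀ v : X → ℝ, Measurable v → Integrable (fun x => |v x| ^ p₀) μ →
        (∫ x, |v x| ^ p₀ ∂μ) ^ (1 / p₀) ≤ D₀ →
      (∫ x in {x | 1 < |v x|}, a x * ((v x) ^ 2 + (g (v x)) ^ 2) ∂μ) ≤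
        C * D₀ ^ (p₀ * (r - 1) / (p₀ - r - 1)) *
          (∫ x in {x | 1 < |v x|}, a x * (g (v x) * v x) ∂μ)
            ^ ((p₀ - 2 * r) / (p₀ - r - 1)) :=
  stmt_16_general m M A r p₀ hm hA hr hp₀
end

section
/- Let p : [0,∞) → [0,∞) be continuous, strictly increasing, with p(0) = 0, so that I + p (where I denotes the identity) is a strictly increasing bijection of [0,∞) onto itself; define q : [0,∞) → [0,∞) by q(x) = x − (I + p)^{−1}(x). Let (s_m)_{m ≥ 0} be a sequence of nonnegative real numbers satisfying s_{m+1} + p(s_{m+1}) ≤ s_m for all m ≥ 0, and let S : [0,∞) → [0,∞) be a differentiable function with S'(t) + q(S(t)) = 0 for all t ≥ 0 and S(0) = s₀. Then s_m ≤ S(m) for every m ∈ ℕ; moreover, if p(x) > 0 for every x > 0, then S(t) → 0 as t → ∞. -/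
/-!
Write `F = (I + p)⁻¹`, so that `q = p ∘ F` on `[0,∞)`; since `F` and `p` are monotone, `q` is
nonnegative and monotone. Hence `S` is nonincreasing, so on `[m, m + 1]` the slope `-q(S)` is at
least `-q(S m)`, giving `S (m + 1) ≥ S m - q (S m) = F (S m)`. On the other hand the recursion says
`s (m + 1) ≤ F (s m)`, and monotonicity of `F` propagates `s m ≤ S m` by induction.
If `p > 0` on `(0,∞)` then `q > 0` there; were `S ≥ ε > 0` throughout, `S` would decrease with slope
at most `-q ε < 0` and become negative.
-/

open Set Filter Topology

section MeanValue

variable {D : Set ℝ} {f f' : ℝ → ℝ} {x y C : ℝ}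

theorem Convex.hasDerivAt_of_mem_Ioo (hD : Convex ℝ D)
    (hf : ∀ t ∈ D, HasDerivWithinAt f (f' t) D t) (hx : x ∈ D) (hy : y ∈ D) {t : ℝ}
    (ht : t ∈ Ioo x y) : HasDerivAt f (f' t) t :=
  have hsub : Ioo x y ⊆ D := Ioo_subset_Icc_self.trans (hD.ordConnected.out hx hy)
  (hf t (hsub ht)).hasDerivAt (mem_of_superset (isOpen_Ioo.mem_nhds ht) hsub)

theorem Convex.mul_sub_le_image_sub_of_le_hasDerivWithinAt (hD : Convex ℝ D)
    (hf : ∀ t ∈ D, HasDerivWithinAt f (f' t) D t) (hx : x ∈ D) (hy : y ∈ D) (hxy : x ≤ y)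
    (hC : ∀ t ∈ Ioo x y, C ≤ f' t) : C * (y - x) ≤ f y - f x := by
  have hIcc : Icc x y ⊆ D := hD.ordConnected.out hx hy
  have hderiv := fun t (ht : t ∈ Ioo x y) => hD.hasDerivAt_of_mem_Ioo hf hx hy ht
  refine (convex_Icc x y).mul_sub_le_image_sub_of_le_deriv ?_ ?_ ?_
    x (left_mem_Icc.2 hxy) y (right_mem_Icc.2 hxy) hxy
  · exact fun t ht => ((hf t (hIcc ht)).continuousWithinAt).mono hIcc
  · rw [interior_Icc]
    exact fun t ht => (hderiv t ht).differentiableAt.differentiableWithinAt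
  · rw [interior_Icc]
    exact fun t ht => (hderiv t ht).deriv ▸ hC t ht

theorem Convex.image_sub_le_mul_sub_of_hasDerivWithinAt_le (hD : Convex ℝ D)
    (hf : ∀ t ∈ D, HasDerivWithinAt f (f' t) D t) (hx : x ∈ D) (hy : y ∈ D) (hxy : x ≤ y)
    (hC : ∀ t ∈ Ioo x y, f' t ≤ C) : f y - f x ≤ C * (y - x) := by
  have := hD.mul_sub_le_image_sub_of_le_hasDerivWithinAt (f := fun t => -f t)
    (fun t ht => (hf t ht).neg) hx hy hxy (fun t ht => neg_le_neg (hC t ht))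
  linarith

end MeanValue

section InverseOfIdAdd

variable {p Finv : ℝ → ℝ}

theorem le_of_add_apply_le_add_apply (hp : MonotoneOn p (Ici 0)) {x y : ℝ} (hx : 0 ≤ x)
    (hy : 0 ≤ y) (h : x + p x ≤ y + p y) : x ≤ y := by
  by_contra! hyx
  linarith [hp hy hx hyx.le]

theorem monotoneOn_inverse_of_add_apply (hp : MonotoneOn p (Ici 0))
    (hFinv : ∀ x ≥ (0:ℝ), 0 ≤ Finv x ∧ Finv x + p (Finv x) = x) :
    MonotoneOn Finv (Ici 0) := fun a ha b hb hab =>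
  le_of_add_apply_le_add_apply hp (hFinv a ha).1 (hFinv b hb).1 <| by
    rw [(hFinv a ha).2, (hFinv b hb).2]
    exact hab

theorem inverse_of_add_apply_pos (hp0 : p 0 = 0)
    (hFinv : ∀ x ≥ (0:ℝ), 0 ≤ Finv x ∧ Finv x + p (Finv x) = x) {x : ℝ} (hx : 0 < x) :
    0 < Finv x := by
  obtain ⟨hnn, hinv⟩ := hFinv x hx.le
  refine hnn.lt_of_ne fun h => ?_
  rw [← h, hp0] at hinv
  linarith

end InverseOfIdAdd

section Comparison

variable {q S : ℝ → ℝ}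

theorem antitoneOn_of_hasDerivWithinAt_neg_comp (hq : ∀ x ≥ (0:ℝ), 0 ≤ q x)
    (hSnn : ∀ t ≥ (0:ℝ), 0 ≤ S t)
    (hS : ∀ t ≥ (0:ℝ), HasDerivWithinAt S (-(q (S t))) (Ici 0) t) :
    AntitoneOn S (Ici 0) := fun a ha b hb hab => by
  have := (convex_Ici 0).image_sub_le_mul_sub_of_hasDerivWithinAt_le hS ha hb hab (C := 0)
    fun t ht => neg_nonpos.2 (hq _ (hSnn t (mem_Ici.1 ha |>.trans ht.1.le)))
  linarith

theorem sub_mul_le_of_hasDerivWithinAt_neg_comp (hq : ∀ x ≥ (0:ℝ), 0 ≤ q x)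
    (hqm : MonotoneOn q (Ici 0)) (hSnn : ∀ t ≥ (0:ℝ), 0 ≤ S t)
    (hS : ∀ t ≥ (0:ℝ), HasDerivWithinAt S (-(q (S t))) (Ici 0) t) {a b : ℝ} (ha : 0 ≤ a)
    (hab : a ≤ b) : S a - q (S a) * (b - a) ≤ S b := by
  have hanti := antitoneOn_of_hasDerivWithinAt_neg_comp hq hSnn hS
  have := (convex_Ici 0).mul_sub_le_image_sub_of_le_hasDerivWithinAt hS ha (ha.trans hab) hab
    (C := -q (S a)) fun t ht =>
      have ht0 : 0 ≤ t := ha.trans ht.1.le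
      neg_le_neg <| hqm (hSnn t ht0) (hSnn a ha) (hanti ha ht0 ht.1.le)
  linarith

theorem tendsto_zero_of_hasDerivWithinAt_neg_comp (hq : ∀ x ≥ (0:ℝ), 0 ≤ q x)
    (hqm : MonotoneOn q (Ici 0)) (hqpos : ∀ x > (0:ℝ), 0 < q x)
    (hSnn : ∀ t ≥ (0:ℝ), 0 ≤ S t)
    (hS : ∀ t ≥ (0:ℝ), HasDerivWithinAt S (-(q (S t))) (Ici 0) t) :
    Tendsto S atTop (𝓝 0) := by
  have hsmall : ∀ ε > 0, ∃ T ≥ 0, S T < ε := by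
    intro ε hε
    by_contra! hbig
    have hc : 0 < q ε := hqpos ε hε
    have hT : 0 ≤ S 0 / q ε + 1 := by positivity [hSnn 0 le_rfl]
    have hdecay := (convex_Ici 0).image_sub_le_mul_sub_of_hasDerivWithinAt_le hS self_mem_Ici hT hT
      (C := -q ε) fun t ht => neg_le_neg <| hqm hε.le (hSnn t ht.1.le) (hbig t ht.1.le)
    have hcT : q ε * (S 0 / q ε + 1) = S 0 + q ε := by field_simp
    linarith [hbig _ hT]
  have hanti := antitoneOn_of_hasDerivWithinAt_neg_comp hq hSnn hS
  refine tendsto_order.2 ⟨fun a ha => ?_, fun ε hε => ?_⟩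
  · filter_upwards [eventually_ge_atTop 0] with t ht using ha.trans_le (hSnn t ht)
  · obtain ⟨T, hT, hST⟩ := hsmall ε hε
    filter_upwards [eventually_ge_atTop T] with t ht
    exact (hanti hT (hT.trans ht) ht).trans_lt hST

end Comparison

theorem stmt_18_general (p : ℝ → ℝ)
    (hpm : StrictMonoOn p (Ici 0))
    (hp0 : p 0 = 0) (hpnn : ∀ x ≥ (0:ℝ), 0 ≤ p x)
    (Finv : ℝ → ℝ)
    (hFinv : ∀ x ≥ (0:ℝ), 0 ≤ Finv x ∧ Finv x + p (Finv x) = x)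
    (q : ℝ → ℝ) (hq : ∀ x ≥ (0:ℝ), q x = x - Finv x)
    (s : ℕ → ℝ) (hs : ∀ m, 0 ≤ s m)
    (hrec : ∀ m : ℕ, s (m + 1) + p (s (m + 1)) ≤ s m)
    (S : ℝ → ℝ) (hS0 : S 0 = s 0) (hSnn : ∀ t ≥ (0:ℝ), 0 ≤ S t)
    (hS : ∀ t ≥ (0:ℝ), HasDerivWithinAt S (-(q (S t))) (Ici 0) t) :
    (∀ m : ℕ, s m ≤ S m) ∧
      ((∀ x > (0:ℝ), 0 < p x) → Tendsto S atTop (nhds 0)) := by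
  have hp := hpm.monotoneOn
  have hFm := monotoneOn_inverse_of_add_apply hp hFinv
  have hqp : ∀ x ≥ (0:ℝ), q x = p (Finv x) := fun x hx => by
    rw [hq x hx]
    linarith [(hFinv x hx).2]
  have hqnn : ∀ x ≥ (0:ℝ), 0 ≤ q x := fun x hx => hqp x hx ▸ hpnn _ (hFinv x hx).1
  have hqm : MonotoneOn q (Ici 0) := fun a ha b hb hab => by
    rw [hqp a ha, hqp b hb]
    exact hp (hFinv a ha).1 (hFinv b hb).1 (hFm ha hb hab)
  refine ⟨fun m => ?_, fun hppos => tendsto_zero_of_hasDerivWithinAt_neg_comp hqnn hqm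
    (fun x hx => hqp x hx.le ▸ hppos _ (inverse_of_add_apply_pos hp0 hFinv hx)) hSnn hS⟩
  induction m with
  | zero => simpa using hS0.ge
  | succ m ih =>
    have hm : (0:ℝ) ≤ m := m.cast_nonneg
    calc s (m + 1) ≤ Finv (s m) := le_of_add_apply_le_add_apply hp (hs _) (hFinv _ (hs m)).1
            ((hFinv _ (hs m)).2.symm ▸ hrec m)
      _ ≤ Finv (S m) := hFm (hs m) (hSnn _ hm) ih
      _ = S m - q (S m) * ((m + 1 : ℝ) - m) := by rw [hq _ (hSnn _ hm)]; ring
      _ ≤ S (m + 1 : ℕ) := by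
        push_cast
        exact sub_mul_le_of_hasDerivWithinAt_neg_comp hqnn hqm hSnn hS hm (by linarith)

/-- (Lasiecka–Tataru Lemma A.)  Let `p : [0,∞) → [0,∞)` be
continuous, strictly increasing, with `p 0 = 0`, so `I + p` is a strictly increasing
bijection of `[0,∞)` onto itself; here `Finv` denotes `(I + p)⁻¹`, and
`q x = x − (I + p)⁻¹ x`.  If `(s_m)` is a sequence of nonnegative reals with
`s_{m+1} + p(s_{m+1}) ≤ s_m`, and `S : [0,∞) → [0,∞)` is differentiable with
`S' + q(S) = 0` and `S 0 = s₀`, then `s_m ≤ S m` for every `m`; moreover, if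
`p x > 0` for every `x > 0`, then `S t → 0` as `t → ∞`. -/
theorem stmt_18 (p : ℝ → ℝ)
    (hpc : ContinuousOn p (Ici 0)) (hpm : StrictMonoOn p (Ici 0))
    (hp0 : p 0 = 0) (hpnn : ∀ x ≥ (0:ℝ), 0 ≤ p x)
    (Finv : ℝ → ℝ)
    (hFinv : ∀ x ≥ (0:ℝ), 0 ≤ Finv x ∧ Finv x + p (Finv x) = x)
    (q : ℝ → ℝ) (hq : ∀ x ≥ (0:ℝ), q x = x - Finv x)
    (s : ℕ → ℝ) (hs : ∀ m, 0 ≤ s m)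
    (hrec : ∀ m : ℕ, s (m + 1) + p (s (m + 1)) ≤ s m)
    (S : ℝ → ℝ) (hS0 : S 0 = s 0) (hSnn : ∀ t ≥ (0:ℝ), 0 ≤ S t)
    (hS : ∀ t ≥ (0:ℝ), HasDerivWithinAt S (-(q (S t))) (Ici 0) t) :
    (∀ m : ℕ, s m ≤ S m) ∧
      ((∀ x > (0:ℝ), 0 < p x) → Tendsto S atTop (nhds 0)) :=
  stmt_18_general p hpm hp0 hpnn Finv hFinv q hq s hs hrec S hS0 hSnn hS
end
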